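/- arXiv:2304.06676 — 4 statements merged into one kernel-verified Lean document; each statement's English description precedes it below -/
import Mathlib

section
/- Let n, m ≥ 1 and ε ≥ 0. Let L and L' be real symmetric positive semidefinite n×n matrices with L·𝟙ₙ = 0 and L'·𝟙ₙ = 0 (the all-ones vector is in their kernels), and suppose that (1/(1+ε))·zᵀLz ≤ zᵀL'z ≤ (1+ε)·zᵀLz holds for all z ∈ ℝⁿ. For k = 1,…,m let V_k be an n×n real diagonal matrix with all diagonal entries nonzero. Let V be the mn×mn block-diagonal matrix with diagonal blocks V_1,…,V_m, let 𝓛 (resp. 𝓛') be the mn×mn block-diagonal matrix with m diagonal copies of L (resp. L'), let 𝒫 ∈ ℝ^{mn} be arbitrary, let 𝟙 ∈ ℝ^{mn} be the all-ones vector, and let φ_V ∈ ℝ^{mn} be the vector whose k-th block of length n has all entries equal to Tr(V_k⁻¹)/Tr(V_k⁻²). Then (1/√(mn))·‖V𝓛'V𝟙 − 𝒫‖ ≤ (1/√(mn))·‖V𝓛V𝟙 − 𝒫‖ + ε·‖V𝓛V‖·‖𝟙 − V⁻¹φ_V‖/√(mn), where ‖·‖ denotes the Euclidean norm on vectors and the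 spectral (operator 2-) norm on matrices. -/
open Matrix
open scoped Matrix.Norms.L2Operator

/-!
Let `D = V(𝓛' - 𝓛)V`. Blockwise, the sandwich inequality gives `|zᵀ(L' - L)z| ≤ ε zᵀLz`, hence
`|zᵀDz| ≤ ε zᵀ(V𝓛V)z` for all `z`. Since `D` is symmetric, its operator norm is the supremum of
its Rayleigh quotient, so `‖D‖ ≤ ε‖V𝓛V‖`. Both Laplacians kill block-constant vectors, so `D`
kills `V⁻¹φ_V`, and `V𝓛'V𝟙 - 𝒫 = (V𝓛V𝟙 - 𝒫) + D(𝟙 - V⁻¹φ_V)`; the triangle inequality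
finishes the proof.
-/

/-- The Euclidean norm of a real vector. -/
noncomputable def vnorm {ι : Type*} [Fintype ι] (v : ι → ℝ) : ℝ :=
  Real.sqrt (∑ i, v i ^ 2)

theorem abs_sub_le_mul_of_inv_mul_le_of_le_mul {q q' ε : ℝ} (hε : 0 ≤ ε)
    (h₁ : 1 / (1 + ε) * q ≤ q') (h₂ : q' ≤ (1 + ε) * q) : |q' - q| ≤ ε * q := by
  have h₁' : q ≤ (1 + ε) * q' := by
    rwa [one_div, inv_mul_le_iff₀ (by positivity)] at h₁
  rw [abs_le]
  constructor <;> nlinarith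

section
variable {ι : Type*} [Fintype ι]

theorem vnorm_eq_norm_toLp (v : ι → ℝ) : vnorm v = ‖WithLp.toLp 2 v‖ := by
  simp [vnorm, EuclideanSpace.norm_eq]

theorem vnorm_nonneg (v : ι → ℝ) : 0 ≤ vnorm v := Real.sqrt_nonneg _

theorem vnorm_add_le (v w : ι → ℝ) : vnorm (v + w) ≤ vnorm v + vnorm w := by
  simp only [vnorm_eq_norm_toLp, WithLp.toLp_add]
  exact norm_add_le _ _

theorem vnorm_mulVec_le [DecidableEq ι] (A : Matrix ι ι ℝ) (v : ι → ℝ) :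
    vnorm (A *ᵥ v) ≤ ‖A‖ * vnorm v := by
  simp only [vnorm_eq_norm_toLp]
  exact A.l2_opNorm_mulVec (WithLp.toLp 2 v)

end

theorem ContinuousLinearMap.norm_le_mul_norm_of_abs_inner_le {E : Type*} [NormedAddCommGroup E]
    [InnerProductSpace ℝ E] {S T : E →L[ℝ] E} (hS : S.IsSymmetric) {ε : ℝ} (hε : 0 ≤ ε)
    (h : ∀ x, |inner ℝ (S x) x| ≤ ε * inner ℝ (T x) x) : ‖S‖ ≤ ε * ‖T‖ := by
  rw [S.norm_eq_iSup_rayleighQuotient hS]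
  refine ciSup_le fun x => ?_
  simp only [rayleighQuotient, reApplyInnerSelf_apply, RCLike.re_to_real, abs_div, abs_sq]
  calc |inner ℝ (S x) x| / ‖x‖ ^ 2 ≤ ε * (inner ℝ (T x) x / ‖x‖ ^ 2) := by
        rw [← mul_div_assoc]; gcongr; exact h x
    _ ≤ ε * ‖T‖ := by
        gcongr
        exact (le_abs_self _).trans (T.rayleighQuotient_le_norm x)

namespace Matrix
variable {ι : Type*} [Fintype ι]

theorem l2_opNorm_le_mul_of_abs_dotProduct_mulVec_le [DecidableEq ι] {C M : Matrix ι ι ℝ}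
    (hC : C.IsHermitian) {ε : ℝ} (hε : 0 ≤ ε) (h : ∀ z, |z ⬝ᵥ C *ᵥ z| ≤ ε * (z ⬝ᵥ M *ᵥ z)) :
    ‖C‖ ≤ ε * ‖M‖ := by
  rw [← l2_opNorm_toEuclideanCLM, ← l2_opNorm_toEuclideanCLM]
  refine ContinuousLinearMap.norm_le_mul_norm_of_abs_inner_le ?_ hε fun x => ?_
  · rw [coe_toEuclideanCLM_eq_toEuclideanLin]; exact isSymmetric_toEuclideanLin_iff.mpr hC
  · simpa only [real_inner_comm, inner_toEuclideanCLM] using h x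

theorem dotProduct_conjTranspose_mul_mul_mulVec (V A : Matrix ι ι ℝ) (z : ι → ℝ) :
    z ⬝ᵥ (Vᴴ * A * V) *ᵥ z = (V *ᵥ z) ⬝ᵥ A *ᵥ (V *ᵥ z) := by
  rw [← mulVec_mulVec, ← mulVec_mulVec, dotProduct_mulVec, conjTranspose_eq_transpose_of_trivial,
    ← mulVec_transpose, transpose_transpose]

theorem l2_opNorm_conjTranspose_mul_mul_sub_le [DecidableEq ι] {A A' : Matrix ι ι ℝ}
    (hA : A.IsHermitian) (hA' : A'.IsHermitian) {ε : ℝ} (hε : 0 ≤ ε)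
    (h : ∀ z, |z ⬝ᵥ A' *ᵥ z - z ⬝ᵥ A *ᵥ z| ≤ ε * (z ⬝ᵥ A *ᵥ z)) (V : Matrix ι ι ℝ) :
    ‖Vᴴ * A' * V - Vᴴ * A * V‖ ≤ ε * ‖Vᴴ * A * V‖ := by
  refine l2_opNorm_le_mul_of_abs_dotProduct_mulVec_le
    ((isHermitian_conjTranspose_mul_mul V hA').sub (isHermitian_conjTranspose_mul_mul V hA))
    hε fun z => ?_
  simp only [sub_mulVec, dotProduct_sub, dotProduct_conjTranspose_mul_mul_mulVec]
  exact h _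

-- For singular `A` this holds because Mathlib's `A⁻¹` is then `0`.
theorem mul_mul_mulVec_nonsing_inv_mulVec_eq_zero {α : Type*} [CommRing α] [DecidableEq ι]
    (A B : Matrix ι ι α) {x : ι → α} (hx : B *ᵥ x = 0) : (A * B * A) *ᵥ (A⁻¹ *ᵥ x) = 0 := by
  by_cases hA : IsUnit A.det
  · rw [mulVec_mulVec, Matrix.mul_assoc, Matrix.mul_assoc, mul_nonsing_inv A hA, Matrix.mul_one,
      ← mulVec_mulVec, hx, mulVec_zero]
  · rw [nonsing_inv_apply_not_isUnit A hA, zero_mulVec, mulVec_zero]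

variable {κ : Type*} [Fintype κ] [DecidableEq κ]

theorem blockDiagonal_mulVec_apply {α : Type*} [CommRing α] (f : κ → Matrix ι ι α)
    (v : ι × κ → α) (p : ι × κ) :
    (blockDiagonal f *ᵥ v) p = (f p.2 *ᵥ fun i => v (i, p.2)) p.1 := by
  obtain ⟨i, k⟩ := p
  simp [mulVec, dotProduct, blockDiagonal_apply, Fintype.sum_prod_type, ite_mul]

theorem dotProduct_blockDiagonal_mulVec {α : Type*} [CommRing α] (f : κ → Matrix ι ι α)
    (z : ι × κ → α) :
    z ⬝ᵥ blockDiagonal f *ᵥ z = ∑ k, (fun i => z (i, k)) ⬝ᵥ f k *ᵥ fun i => z (i, k) := by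
  simp only [dotProduct, blockDiagonal_mulVec_apply, Fintype.sum_prod_type]
  exact Finset.sum_comm

theorem blockDiagonal_mulVec_eq_zero {α : Type*} [CommRing α] {f : κ → Matrix ι ι α}
    (hf : ∀ k, f k *ᵥ (fun _ => 1) = 0) {v : ι × κ → α} (hv : ∀ i j k, v (i, k) = v (j, k)) :
    blockDiagonal f *ᵥ v = 0 := by
  ext ⟨i, k⟩
  obtain ⟨i₀⟩ : Nonempty ι := ⟨i⟩
  have hconst : (fun j => v (j, k)) = v (i₀, k) • fun _ => 1 := by
    ext j; simp [hv j i₀ k]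
  rw [blockDiagonal_mulVec_apply, hconst, mulVec_smul, hf, smul_zero]
  rfl

theorem abs_dotProduct_blockDiagonal_sub_le {f g : κ → Matrix ι ι ℝ} {ε : ℝ}
    (h : ∀ k y, |y ⬝ᵥ f k *ᵥ y - y ⬝ᵥ g k *ᵥ y| ≤ ε * (y ⬝ᵥ g k *ᵥ y)) (z : ι × κ → ℝ) :
    |z ⬝ᵥ blockDiagonal f *ᵥ z - z ⬝ᵥ blockDiagonal g *ᵥ z| ≤
      ε * (z ⬝ᵥ blockDiagonal g *ᵥ z) := by
  rw [dotProduct_blockDiagonal_mulVec, dotProduct_blockDiagonal_mulVec, ← Finset.sum_sub_distrib,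
    Finset.mul_sum]
  exact (Finset.abs_sum_le_sum_abs _ _).trans (Finset.sum_le_sum fun k _ => h k _)

end Matrix

theorem dc_sparse_rms_bound_general
    (n m : ℕ) (ε : ℝ) (hε : 0 ≤ ε)
    (L L' : Matrix (Fin n) (Fin n) ℝ)
    (hL : L.PosSemidef) (hL' : L'.PosSemidef)
    (hL1 : L.mulVec (fun _ => 1) = 0) (hL'1 : L'.mulVec (fun _ => 1) = 0)
    (hsand : ∀ z : Fin n → ℝ,
      (1 / (1 + ε)) * (z ⬝ᵥ L.mulVec z) ≤ z ⬝ᵥ L'.mulVec z ∧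
      z ⬝ᵥ L'.mulVec z ≤ (1 + ε) * (z ⬝ᵥ L.mulVec z))
    (d : Fin m → Fin n → ℝ)
    (P : Fin n × Fin m → ℝ)
    -- the block-diagonal voltage matrix and block-diagonal Laplacians
    (V 𝓛 𝓛' : Matrix (Fin n × Fin m) (Fin n × Fin m) ℝ)
    (hV : V = blockDiagonal (fun k => diagonal (d k)))
    (h𝓛 : 𝓛 = blockDiagonal (fun _ => L))
    (h𝓛' : 𝓛' = blockDiagonal (fun _ => L'))
    -- the block-constant vector φ_V with entries Tr(V_k⁻¹)/Tr(V_k⁻²)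
    (φ : Fin n × Fin m → ℝ)
    (hφ : φ = fun p => ((diagonal (d p.2))⁻¹).trace /
      ((diagonal (d p.2))⁻¹ * (diagonal (d p.2))⁻¹).trace) :
    (1 / Real.sqrt (m * n)) * vnorm ((V * 𝓛' * V).mulVec (fun _ => 1) - P) ≤
      (1 / Real.sqrt (m * n)) * vnorm ((V * 𝓛 * V).mulVec (fun _ => 1) - P) +
        ε * ‖V * 𝓛 * V‖ * vnorm ((fun _ => 1) - V⁻¹.mulVec φ) / Real.sqrt (m * n) := by
  set C := V * 𝓛' * V - V * 𝓛 * V with hC_def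
  set w : Fin n × Fin m → ℝ := (fun _ => 1) - V⁻¹ *ᵥ φ
  have hVh : Vᴴ = V := by
    rw [hV]; exact (isHermitian_blockDiagonal_iff.mpr fun k => isHermitian_diagonal (d k)).eq
  have hC : ‖C‖ ≤ ε * ‖V * 𝓛 * V‖ := by
    have hquad := abs_dotProduct_blockDiagonal_sub_le (f := fun _ : Fin m => L') (g := fun _ => L)
      fun _ y => abs_sub_le_mul_of_inv_mul_le_of_le_mul hε (hsand y).1 (hsand y).2
    have := l2_opNorm_conjTranspose_mul_mul_sub_le (isHermitian_blockDiagonal_iff.mpr fun _ => hL.1)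
      (isHermitian_blockDiagonal_iff.mpr fun _ => hL'.1) hε hquad V
    rwa [hVh, ← h𝓛, ← h𝓛'] at this
  have hφ_const : ∀ i j k, φ (i, k) = φ (j, k) := by subst hφ; exact fun _ _ _ => rfl
  have hCφ : C *ᵥ (V⁻¹ *ᵥ φ) = 0 := by
    rw [hC_def, sub_mulVec,
      mul_mul_mulVec_nonsing_inv_mulVec_eq_zero V 𝓛
        (h𝓛 ▸ blockDiagonal_mulVec_eq_zero (fun _ => hL1) hφ_const),
      mul_mul_mulVec_nonsing_inv_mulVec_eq_zero V 𝓛'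
        (h𝓛' ▸ blockDiagonal_mulVec_eq_zero (fun _ => hL'1) hφ_const), sub_zero]
  have hsplit : (V * 𝓛' * V) *ᵥ (fun _ => 1) - P =
      ((V * 𝓛 * V) *ᵥ (fun _ => 1) - P) + C *ᵥ w := by
    rw [mulVec_sub, hCφ, sub_zero, hC_def, sub_mulVec]; abel
  have hfit : vnorm ((V * 𝓛' * V) *ᵥ (fun _ => 1) - P) ≤
      vnorm ((V * 𝓛 * V) *ᵥ (fun _ => 1) - P) + ε * ‖V * 𝓛 * V‖ * vnorm w :=
    calc _ ≤ vnorm ((V * 𝓛 * V) *ᵥ (fun _ => 1) - P) + ‖C‖ * vnorm w := by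
          rw [hsplit]
          exact (vnorm_add_le _ _).trans (add_le_add_right (vnorm_mulVec_le C w) _)
      _ ≤ _ := by grw [hC]; exact vnorm_nonneg w
  calc _ ≤ (1 / Real.sqrt (m * n)) *
        (vnorm ((V * 𝓛 * V) *ᵥ (fun _ => 1) - P) + ε * ‖V * 𝓛 * V‖ * vnorm w) := by
        gcongr
    _ = _ := by ring

/-- Main DC theorem. If `L'` is the Laplacian of an ε-approximation of the
network with Laplacian `L`, then the fitting error of the sparse network exceeds that of the
original by at most `ε‖V𝓛V‖‖𝟙 − V⁻¹φ_V‖/√(mn)`. -/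
theorem dc_sparse_rms_bound
    (n m : ℕ) (hn : 1 ≤ n) (hm : 1 ≤ m) (ε : ℝ) (hε : 0 ≤ ε)
    (L L' : Matrix (Fin n) (Fin n) ℝ)
    (hL : L.PosSemidef) (hL' : L'.PosSemidef)
    (hL1 : L.mulVec (fun _ => 1) = 0) (hL'1 : L'.mulVec (fun _ => 1) = 0)
    (hsand : ∀ z : Fin n → ℝ,
      (1 / (1 + ε)) * (z ⬝ᵥ L.mulVec z) ≤ z ⬝ᵥ L'.mulVec z ∧
      z ⬝ᵥ L'.mulVec z ≤ (1 + ε) * (z ⬝ᵥ L.mulVec z))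
    (d : Fin m → Fin n → ℝ) (hd : ∀ k j, d k j ≠ 0)
    (P : Fin n × Fin m → ℝ)
    -- the block-diagonal voltage matrix and block-diagonal Laplacians
    (V 𝓛 𝓛' : Matrix (Fin n × Fin m) (Fin n × Fin m) ℝ)
    (hV : V = blockDiagonal (fun k => diagonal (d k)))
    (h𝓛 : 𝓛 = blockDiagonal (fun _ => L))
    (h𝓛' : 𝓛' = blockDiagonal (fun _ => L'))
    -- the block-constant vector φ_V with entries Tr(V_k⁻¹)/Tr(V_k⁻²)
    (φ : Fin n × Fin m → ℝ)
    (hφ : φ = fun p => ((diagonal (d p.2))⁻¹).trace /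
      ((diagonal (d p.2))⁻¹ * (diagonal (d p.2))⁻¹).trace) :
    (1 / Real.sqrt (m * n)) * vnorm ((V * 𝓛' * V).mulVec (fun _ => 1) - P) ≤
      (1 / Real.sqrt (m * n)) * vnorm ((V * 𝓛 * V).mulVec (fun _ => 1) - P) +
        ε * ‖V * 𝓛 * V‖ * vnorm ((fun _ => 1) - V⁻¹.mulVec φ) / Real.sqrt (m * n) :=
  dc_sparse_rms_bound_general n m ε hε L L' hL hL' hL1 hL'1 hsand d P V 𝓛 𝓛' hV h𝓛 h𝓛' φ hφ
end

section
/- Let n ≥ 1 and ε ≥ 0. Let L and L' be real symmetric positive semidefinite n×n matrices such that (1/(1+ε))·zᵀLz ≤ zᵀL'z ≤ (1+ε)·zᵀLz for all z ∈ ℝⁿ, and let D be any real symmetric n×n matrix. Then ‖D(L'−L)D‖ ≤ ε·‖DLD‖, where ‖·‖ denotes the spectral (operator 2-) norm. -/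
open Matrix
open scoped Matrix.Norms.L2Operator

/-! Conjugating by the symmetric `D` turns the sandwich into the quadratic-form bound
`|xᵀ D(L'−L)D x| ≤ ε · xᵀ DLD x ≤ ε ‖DLD‖ ‖x‖²`, and the operator norm of the symmetric matrix
`D(L'−L)D` is the supremum of its absolute Rayleigh quotient. -/

theorem abs_sub_le_mul_of_approx {a b ε : ℝ} (ha : 0 ≤ a) (hε : 0 ≤ ε)
    (hlow : 1 / (1 + ε) * a ≤ b) (hup : b ≤ (1 + ε) * a) : |b - a| ≤ ε * a := by
  have hshrink : (1 - ε) * a ≤ 1 / (1 + ε) * a := by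
    gcongr
    rw [le_div_iff₀ (by positivity)]
    nlinarith
  rw [abs_sub_le_iff]
  constructor <;> nlinarith

theorem ContinuousLinearMap.opNorm_le_of_abs_re_inner_self_le {𝕜 E : Type*} [RCLike 𝕜]
    [NormedAddCommGroup E] [InnerProductSpace 𝕜 E] {T : E →L[𝕜] E}
    (hT : (T : E →ₗ[𝕜] E).IsSymmetric) {C : ℝ} (hC : 0 ≤ C)
    (h : ∀ x, |RCLike.re (inner 𝕜 (T x) x)| ≤ C * ‖x‖ ^ 2) : ‖T‖ ≤ C := by
  rw [T.norm_eq_iSup_rayleighQuotient hT]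
  refine ciSup_le fun x => ?_
  rw [rayleighQuotient, abs_div, abs_sq]
  exact div_le_of_le_mul₀ (by positivity) hC (h x)

namespace Matrix

theorem dotProduct_transpose_mul_mul_mulVec {m n R : Type*} [Fintype m] [Fintype n]
    [CommSemiring R] (B : Matrix m n R) (M : Matrix m m R) (x : n → R) :
    x ⬝ᵥ (Bᵀ * M * B) *ᵥ x = (B *ᵥ x) ⬝ᵥ M *ᵥ (B *ᵥ x) := by
  rw [← mulVec_mulVec, ← mulVec_mulVec, dotProduct_mulVec, vecMul_transpose]

variable {n : Type*} [Fintype n] [DecidableEq n]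

theorem abs_dotProduct_mulVec_le_l2_opNorm (A : Matrix n n ℝ) (x : EuclideanSpace ℝ n) :
    |x ⬝ᵥ A *ᵥ x| ≤ ‖A‖ * ‖x‖ ^ 2 := by
  rw [← inner_toEuclideanCLM]
  calc _ ≤ ‖x‖ * ‖toEuclideanCLM (𝕜 := ℝ) A x‖ := abs_real_inner_le_norm _ _
    _ ≤ ‖x‖ * (‖A‖ * ‖x‖) := by gcongr; exact (toEuclideanCLM (𝕜 := ℝ) A).le_opNorm x
    _ = ‖A‖ * ‖x‖ ^ 2 := by ring

theorem l2_opNorm_le_of_abs_dotProduct_mulVec_le {A : Matrix n n ℝ} (hA : A.IsHermitian)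
    {C : ℝ} (hC : 0 ≤ C) (h : ∀ x : EuclideanSpace ℝ n, |x ⬝ᵥ A *ᵥ x| ≤ C * ‖x‖ ^ 2) :
    ‖A‖ ≤ C := by
  have hT : (toEuclideanCLM (𝕜 := ℝ) A : EuclideanSpace ℝ n →ₗ[ℝ] _).IsSymmetric := by
    rw [coe_toEuclideanCLM_eq_toEuclideanLin]
    exact isSymmetric_toEuclideanLin_iff.mpr hA
  rw [cstar_norm_def]
  refine ContinuousLinearMap.opNorm_le_of_abs_re_inner_self_le hT hC fun x => ?_
  rw [RCLike.re_to_real, real_inner_comm, inner_toEuclideanCLM]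
  exact h x

end Matrix

theorem spectral_congruence_norm_bound_general
    (n : ℕ) (ε : ℝ) (hε : 0 ≤ ε)
    (L L' D : Matrix (Fin n) (Fin n) ℝ)
    (hL : L.PosSemidef) (hL' : L'.PosSemidef) (hD : D.IsSymm)
    (hsand : ∀ z : Fin n → ℝ,
      (1 / (1 + ε)) * (z ⬝ᵥ L.mulVec z) ≤ z ⬝ᵥ L'.mulVec z ∧
      z ⬝ᵥ L'.mulVec z ≤ (1 + ε) * (z ⬝ᵥ L.mulVec z)) :
    ‖D * (L' - L) * D‖ ≤ ε * ‖D * L * D‖ := by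
  have hcong (M : Matrix (Fin n) (Fin n) ℝ) (x : Fin n → ℝ) :
      x ⬝ᵥ (D * M * D) *ᵥ x = (D *ᵥ x) ⬝ᵥ M *ᵥ (D *ᵥ x) := by
    simpa only [hD.eq] using dotProduct_transpose_mul_mul_mulVec D M x
  have hsym : (D * (L' - L) * D).IsHermitian := by
    simpa only [conjTranspose_eq_transpose_of_trivial, hD.eq] using
      isHermitian_conjTranspose_mul_mul D (hL'.isHermitian.sub hL.isHermitian)
  refine l2_opNorm_le_of_abs_dotProduct_mulVec_le hsym (by positivity) fun x => ?_
  obtain ⟨hlow, hup⟩ := hsand (D *ᵥ x)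
  calc |x ⬝ᵥ (D * (L' - L) * D) *ᵥ x| ≤ ε * (x ⬝ᵥ (D * L * D) *ᵥ x) := by
        rw [hcong, hcong, sub_mulVec, dotProduct_sub]
        exact abs_sub_le_mul_of_approx (hL.dotProduct_mulVec_nonneg _) hε hlow hup
    _ ≤ ε * (‖D * L * D‖ * ‖x‖ ^ 2) := by
        gcongr
        exact (le_abs_self _).trans (abs_dotProduct_mulVec_le_l2_opNorm _ x)
    _ = ε * ‖D * L * D‖ * ‖x‖ ^ 2 := by ring

/-- If symmetric PSD matrices `L, L'` satisfy the ε-approximation sandwich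
inequalities and `D` is any real symmetric matrix, then `‖D(L'−L)D‖ ≤ ε‖DLD‖` in the
spectral (operator 2-) norm. -/
theorem spectral_congruence_norm_bound
    (n : ℕ) (hn : 1 ≤ n) (ε : ℝ) (hε : 0 ≤ ε)
    (L L' D : Matrix (Fin n) (Fin n) ℝ)
    (hL : L.PosSemidef) (hL' : L'.PosSemidef) (hD : D.IsSymm)
    (hsand : ∀ z : Fin n → ℝ,
      (1 / (1 + ε)) * (z ⬝ᵥ L.mulVec z) ≤ z ⬝ᵥ L'.mulVec z ∧
      z ⬝ᵥ L'.mulVec z ≤ (1 + ε) * (z ⬝ᵥ L.mulVec z)) :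
    ‖D * (L' - L) * D‖ ≤ ε * ‖D * L * D‖ :=
  spectral_congruence_norm_bound_general n ε hε L L' D hL hL' hD hsand
end

section
/- Let c₁₂, c₂₃ > 0, I, λ ∈ ℝ, and set e₁ = I/c₁₂ + λ, e₂ = λ, e₃ = −I/c₂₃ + λ. Define the 3×3 real matrix M = [[e₁² − e₁e₂, e₁² − e₁e₃, 0], [e₂² − e₁e₂, 0, e₂² − e₂e₃], [0, e₃² − e₁e₃, e₃² − e₂e₃]] and the vector z = (−1 − c₁₂/c₂₃, 1, −1 − c₂₃/c₁₂)ᵀ. Then M·z = 0. In particular z lies in the kernel of M for every choice of I and λ, and M is singular. -/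
open Matrix

/-- The matrix `M = M_{E₂}(x)` of the parameter estimation problem for `K₃`
evaluated at any state of the path network kills the vector
`z = (−1 − c₁₂/c₂₃, 1, −1 − c₂₃/c₁₂)ᵀ`, independently of `I` and `λ`; in particular `M` is
singular. -/
theorem triangle_vandermonde_kernel
    (c12 c23 : ℝ) (hc12 : 0 < c12) (hc23 : 0 < c23) (I lam : ℝ)
    (e1 e2 e3 : ℝ)
    (he1 : e1 = I / c12 + lam) (he2 : e2 = lam) (he3 : e3 = -I / c23 + lam)
    (M : Matrix (Fin 3) (Fin 3) ℝ)
    (hM : M = !![e1 ^ 2 - e1 * e2, e1 ^ 2 - e1 * e3, 0;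
                 e2 ^ 2 - e1 * e2, 0, e2 ^ 2 - e2 * e3;
                 0, e3 ^ 2 - e1 * e3, e3 ^ 2 - e2 * e3])
    (z : Fin 3 → ℝ)
    (hz : z = ![-1 - c12 / c23, 1, -1 - c23 / c12]) :
    M.mulVec z = 0 ∧ M.det = 0 := by
  subst hM hz he1 he2 he3
  constructor
  · funext i
    fin_cases i <;>
      simp [Matrix.mulVec, dotProduct, Fin.sum_univ_succ] <;>
      field_simp <;> ring
  · simp [Matrix.det_fin_three]
    field_simp
    ring
end

section
/- Let c₁₂, c₂₃ > 0, I, λ ∈ ℝ, and set e₁ = I/c₁₂ + λ, e₂ = λ, e₃ = −I/c₂₃ + λ. Define M = [[e₁² − e₁e₂, e₁² − e₁e₃, 0], [e₂² − e₁e₂, 0, e₂² − e₂e₃], [0, e₃² − e₁e₃, e₃² − e₂e₃]], U = (I²/c₁₂ + λI, 0, I²/c₂₃ − λI)ᵀ, and z = (−1 − c₁₂/c₂₃, 1, −1 − c₂₃/c₁₂)ᵀ. Then for every δ ∈ [0, c₁₂c₂₃/(c₁₂+c₂₃)], the vector w(δ) = (c₁₂, 0, c₂₃)ᵀ + δ·z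 has all entries nonnegative and satisfies M·w(δ) = U. Moreover, at the endpoint δ = c₁₂c₂₃/(c₁₂+c₂₃), the first and third entries of w(δ) are zero and its second entry c₁₃ = c₁₂c₂₃/(c₁₂+c₂₃) satisfies 1/c₁₃ = 1/c₁₂ + 1/c₂₃. -/
open Matrix

/-- The segment of exact nonnegative solutions of the parameter estimation
problem on `K₃` from data of the path network: for every `δ ∈ [0, c₁₂c₂₃/(c₁₂+c₂₃)]` the vector
`w(δ) = (c₁₂, 0, c₂₃)ᵀ + δz` is nonnegative and satisfies `M·w(δ) = U`; at the right endpoint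
the first and third entries vanish and the middle entry `c₁₃` satisfies the series formula
`1/c₁₃ = 1/c₁₂ + 1/c₂₃`. -/
theorem triangle_solution_segment
    (c12 c23 : ℝ) (hc12 : 0 < c12) (hc23 : 0 < c23) (I lam : ℝ)
    (e1 e2 e3 : ℝ)
    (he1 : e1 = I / c12 + lam) (he2 : e2 = lam) (he3 : e3 = -I / c23 + lam)
    (M : Matrix (Fin 3) (Fin 3) ℝ)
    (hM : M = !![e1 ^ 2 - e1 * e2, e1 ^ 2 - e1 * e3, 0;
                 e2 ^ 2 - e1 * e2, 0, e2 ^ 2 - e2 * e3;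
                 0, e3 ^ 2 - e1 * e3, e3 ^ 2 - e2 * e3])
    (U : Fin 3 → ℝ)
    (hU : U = ![I ^ 2 / c12 + lam * I, 0, I ^ 2 / c23 - lam * I])
    (z : Fin 3 → ℝ)
    (hz : z = ![-1 - c12 / c23, 1, -1 - c23 / c12])
    (w : ℝ → Fin 3 → ℝ)
    (hw : w = fun δ => ![c12, 0, c23] + δ • z) :
    (∀ δ ∈ Set.Icc (0 : ℝ) (c12 * c23 / (c12 + c23)),
      (∀ i, 0 ≤ w δ i) ∧ M.mulVec (w δ) = U) ∧
    w (c12 * c23 / (c12 + c23)) 0 = 0 ∧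
    w (c12 * c23 / (c12 + c23)) 2 = 0 ∧
    w (c12 * c23 / (c12 + c23)) 1 = c12 * c23 / (c12 + c23) ∧
    1 / w (c12 * c23 / (c12 + c23)) 1 = 1 / c12 + 1 / c23 := by
  have hsum : 0 < c12 + c23 := by linarith
  subst he1 he2 he3 hM hU hz hw
  refine ⟨?_, ?_, ?_, ?_, ?_⟩
  · rintro δ ⟨h0, h1⟩
    have key : δ * (c12 + c23) ≤ c12 * c23 := (le_div_iff₀ hsum).mp h1
    constructor
    · intro i
      fin_cases i <;>
        simp [Pi.add_apply, Pi.smul_apply, smul_eq_mul]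
      · have h2 : c12 + δ * (-1 - c12 / c23) = (c12 * c23 - δ * (c12 + c23)) / c23 := by
          field_simp; ring
        rw [h2]
        apply div_nonneg (by linarith) hc23.le
      · linarith
      · have h2 : c23 + δ * (-1 - c23 / c12) = (c12 * c23 - δ * (c12 + c23)) / c12 := by
          field_simp; ring
        rw [h2]
        apply div_nonneg (by linarith) hc12.le
    · funext i
      fin_cases i <;>
        simp [mulVec, dotProduct, Fin.sum_univ_three, Pi.add_apply, Pi.smul_apply,
          smul_eq_mul] <;>
        field_simp <;> ring
  · show c12 + c12 * c23 / (c12 + c23) * (-1 - c12 / c23) = 0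
    field_simp
    ring
  · show c23 + c12 * c23 / (c12 + c23) * (-1 - c23 / c12) = 0
    field_simp
    ring
  · show (0:ℝ) + c12 * c23 / (c12 + c23) * 1 = c12 * c23 / (c12 + c23)
    ring
  · show 1 / ((0:ℝ) + c12 * c23 / (c12 + c23) * 1) = 1 / c12 + 1 / c23
    field_simp
    ring
end
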